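/- Let s ≥ 1, ρ > 0 and u ∈ H₀^{ρ,s}. For any real spectral parameter κ > 100 C_s ‖u‖_{ρ,s}, the point −κ belongs to the resolvent set of the Lax operator L_u acting on H₊^{ρ,s}: the resolvent R(κ,u) = (L_u + κ)^{−1} is a bounded linear operator on H₊^{ρ,s} mapping H₊^{ρ,s} bijectively onto H₊^{ρ,s+1}, it equals the convergent Neumann series R(κ,u) = R₀(κ) Σ_{j≥0} (−1)^j [T_u R₀(κ)]^j in B(H₊^{ρ,s}), and its operator norm satisfies ‖R(κ,u)‖ ≤ 1/(κ − C_s ‖u‖_{ρ,s}). -/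

import Mathlib

/-!
Common framework: we model periodic functions on the torus 𝕋 = ℝ/2πℤ by their
sequences of Fourier coefficients `u : ℤ → ℂ`.  Products of functions become
convolutions of coefficients, the analytic Sobolev norm is an exponentially
weighted ℓ²-sum, and the Hardy space L²₊ is modelled as `lp`-space over the
positive integer frequencies.
-/

noncomputable section
open Filter Set
open scoped BigOperators Topology

namespace BO

/-- Japanese bracket `⟨n⟩ = (1+n²)^{1/2}`. -/
def jb (n : ℤ) : ℝ := Real.sqrt (1 + (n : ℝ) ^ 2)

/-- The weight `⟨n⟩^s e^{ρ|n|}` of the analytic Sobolev space `H^{ρ,s}`. -/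
def wt (ρ s : ℝ) (n : ℤ) : ℝ := jb n ^ s * Real.exp (ρ * |(n : ℝ)|)

/-- Membership in `H^{ρ,s}` (for the Fourier coefficients `u`). -/
def MemH (ρ s : ℝ) (u : ℤ → ℂ) : Prop :=
  Summable fun n : ℤ => wt ρ s n ^ 2 * ‖u n‖ ^ 2

/-- The analytic Sobolev norm `‖u‖_{ρ,s}`. -/
def anorm (ρ s : ℝ) (u : ℤ → ℂ) : ℝ :=
  Real.sqrt (∑' n : ℤ, wt ρ s n ^ 2 * ‖u n‖ ^ 2)

/-- The (normalized) `L²` norm. -/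
def l2norm (u : ℤ → ℂ) : ℝ := Real.sqrt (∑' n : ℤ, ‖u n‖ ^ 2)

/-- `u` is the coefficient sequence of a real-valued function. -/
def IsReal (u : ℤ → ℂ) : Prop := ∀ n : ℤ, u (-n) = (starRingEnd ℂ) (u n)

/-- Fourier coefficients of the pointwise product (= convolution). -/
def fmul (u v : ℤ → ℂ) : ℤ → ℂ := fun n => ∑' m : ℤ, u (n - m) * v m

/-- Projection onto positive frequencies, `C₊`. -/
def Cplus (u : ℤ → ℂ) : ℤ → ℂ := fun n => if 0 < n then u n else 0

/-- Projection onto negative frequencies, `C₋`. -/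
def Cminus (u : ℤ → ℂ) : ℤ → ℂ := fun n => if n < 0 then u n else 0

/-- Projection onto the zero mode (spatial mean), `P₀`. -/
def P0 (u : ℤ → ℂ) : ℤ → ℂ := fun n => if n = 0 then u 0 else 0

/-- Membership in the positive-frequency space `H₊^{ρ,s}`. -/
def MemHplus (ρ s : ℝ) (u : ℤ → ℂ) : Prop :=
  MemH ρ s u ∧ ∀ n : ℤ, n ≤ 0 → u n = 0

/-- Coefficients of the constant function `1`. -/
def delta0 : ℤ → ℂ := fun n => if n = 0 then 1 else 0

/-- Spatial derivative `∂ₓ` (multiplier `i n`). -/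
def dx (u : ℤ → ℂ) : ℤ → ℂ := fun n => Complex.I * (n : ℂ) * u n

/-- Coefficients of the complex conjugate function. -/
def conjFun (u : ℤ → ℂ) : ℤ → ℂ := fun n => (starRingEnd ℂ) (u (-n))

/-- The Toeplitz operator `T_u f = C₊(uf)`. -/
def Toep (u f : ℤ → ℂ) : ℤ → ℂ := Cplus (fmul u f)

/-- The Lax operator `L_u f = -2i∂ₓ f + C₊(uf)` (multiplier `2n` plus Toeplitz). -/
def LaxOp (u f : ℤ → ℂ) : ℤ → ℂ := fun n => 2 * (n : ℂ) * f n + Toep u f n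

/-- The free resolvent `R₀(κ) = (L₀+κ)⁻¹` on positive frequencies. -/
def R0 (κ : ℝ) (u : ℤ → ℂ) : ℤ → ℂ :=
  fun n => if 0 < n then (2 * (n : ℂ) + (κ : ℂ))⁻¹ * u n else 0

/-- The algebra constant `C_s = 2^{s+1} (Σ_k ⟨k⟩^{-2s})^{1/2}` of `H^{ρ,s}`. -/
def Cs (s : ℝ) : ℝ := (2 : ℝ) ^ (s + 1) * Real.sqrt (∑' k : ℤ, jb k ^ (-(2 * s)))

/-- Positive integer frequencies. -/
abbrev PosZ := {n : ℤ // 0 < n}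

/-- The Hardy space `L²₊(𝕋)` in Fourier coordinates. -/
abbrev Hardy := lp (fun _ : PosZ => ℂ) 2

/-- The `H¹₊` subset of the Hardy space. -/
def H1set : Set Hardy := {f | Summable fun n : PosZ => (1 + ((n : ℤ) : ℝ) ^ 2) * ‖f n‖ ^ 2}

/-- `L²` norm of a positive-frequency coefficient sequence. -/
def l2p (f : PosZ → ℂ) : ℝ := Real.sqrt (∑' n : PosZ, ‖f n‖ ^ 2)

/-- Action of the Lax operator `L_v` on positive-frequency coefficients. -/
def laxC (v : ℤ → ℂ) (f : PosZ → ℂ) : PosZ → ℂ :=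
  fun n => 2 * ((n : ℤ) : ℂ) * f n + ∑' m : PosZ, v ((n : ℤ) - (m : ℤ)) * f m

/-- Exponentially shifted symbol: `(eshift σ v)(k) = e^{σ k} v(k)`. -/
def eshift (σ : ℝ) (v : ℤ → ℂ) : ℤ → ℂ := fun k => (Real.exp (σ * (k : ℝ)) : ℂ) * v k

/-- `ψ = e^{(ρ/2)L_v} v₊`, characterized by the backward flow
`φ(τ) = e^{(ρ/2-τ)L_v} v₊`: a strongly `C¹` curve in `H¹₊ ⊂ L²₊` with
`φ' = -L_v φ`, `φ(0) = ψ` and `φ(ρ/2) = v₊`. -/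
def IsSpecState (ρ : ℝ) (v : ℤ → ℂ) (ψ : PosZ → ℂ) : Prop :=
  ∃ φ : ℝ → PosZ → ℂ,
    φ 0 = ψ ∧
    (∀ n : PosZ, φ (ρ / 2) n = v (n : ℤ)) ∧
    (∀ τ ∈ Set.Icc (0 : ℝ) (ρ / 2),
      Summable fun n : PosZ => (1 + ((n : ℤ) : ℝ) ^ 2) * ‖φ τ n‖ ^ 2) ∧
    (∀ τ ∈ Set.Icc (0 : ℝ) (ρ / 2),
      Filter.Tendsto
        (fun τ' : ℝ =>
          l2p (fun n => φ τ' n - φ τ n + ((τ' - τ : ℝ) : ℂ) * laxC v (φ τ) n) / |τ' - τ|)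
        (nhdsWithin τ (Set.Icc (0 : ℝ) (ρ / 2) \ {τ})) (nhds 0))

/-- The exponential spectral energy `E_ρ(v) = ‖ψ_v‖² + ‖(1/2)L_v ψ_v‖²`
expressed through the state `ψ = e^{(ρ/2)L_v}v₊`. -/
def Erho (v : ℤ → ℂ) (ψ : PosZ → ℂ) : ℝ :=
  (∑' n : PosZ, ‖ψ n‖ ^ 2) + (1 / 4) * ∑' n : PosZ, ‖laxC v ψ n‖ ^ 2

/-- The geometric constant `c₁ = (1/2)(π²/6 - (π coth π - 1)/2)^{1/2}`. -/
def c1const : ℝ :=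
  (1 / 2) * Real.sqrt (Real.pi ^ 2 / 6 -
    (Real.pi * (Real.cosh Real.pi / Real.sinh Real.pi) - 1) / 2)

/-- The geometric constant `c₂ = (π coth π - 1)^{1/2}`. -/
def c2const : ℝ :=
  Real.sqrt (Real.pi * (Real.cosh Real.pi / Real.sinh Real.pi) - 1)

/-- The geometric bounding function `f(x) = (1/√2) e^{-c₁x}(x - (√2/2)c₂x²)`. -/
def fbar (c₁ c₂ x : ℝ) : ℝ :=
  (1 / Real.sqrt 2) * Real.exp (-c₁ * x) * (x - (Real.sqrt 2 / 2) * c₂ * x ^ 2)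

/-- `m` is the resolvent gauge variable `m(κ,u) = (L_u+κ)⁻¹ u₊`:
the unique positive-frequency `ℓ²` solution of `(L_u+κ)m = u₊`. -/
def IsGauge (κ : ℝ) (u m : ℤ → ℂ) : Prop :=
  (∀ n : ℤ, n ≤ 0 → m n = 0) ∧ (Summable fun n : ℤ => ‖m n‖ ^ 2) ∧
  ∀ n : ℤ, LaxOp u m n + (κ : ℂ) * m n = Cplus u n

-- The gauge variable, selected by choice (it is unique for `κ` large).
open scoped Classical in
def gauge (κ : ℝ) (u : ℤ → ℂ) : ℤ → ℂ :=
  if h : ∃ m : ℤ → ℂ, IsGauge κ u m then h.choose else 0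

/-- The spectral generating functional `β(κ;u) = ⟨u₊, m(κ,u)⟩_{L²}`. -/
def beta (κ : ℝ) (u : ℤ → ℂ) : ℂ :=
  ∑' n : ℤ, Cplus u n * (starRingEnd ℂ) (gauge κ u n)

/-- Right-hand side of the Benjamin–Ono equation,
`∂ₜ u = -H∂ₓₓu - u∂ₓu` (the multiplier of `H∂ₓₓ` is `i n |n|`). -/
def BOrhs (u : ℤ → ℂ) : ℤ → ℂ :=
  fun n => -(Complex.I * (n : ℂ) * ((|n| : ℤ) : ℂ) * u n) - fmul u (dx u) n

/-- `u` is a global solution of the regularized `H_κ` flow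
`∂ₜu = -(κ/2)∂ₓu + (κ²/2)∂ₓ(m + m̄ - |m|²)` with data `u₀`,
continuous in time with values in `H₀^{ρ,1}`. -/
def IsHkFlow (ρ κ : ℝ) (u₀ : ℤ → ℂ) (u : ℝ → ℤ → ℂ) : Prop :=
  u 0 = u₀ ∧
  (∀ t : ℝ, MemH ρ 1 (u t) ∧ u t 0 = 0 ∧ IsReal (u t)) ∧
  (∀ t₀ : ℝ, Filter.Tendsto (fun t => anorm ρ 1 (fun n => u t n - u t₀ n))
      (nhds t₀) (nhds 0)) ∧
  (∀ t : ℝ, ∃ m : ℤ → ℂ, IsGauge κ (u t) m ∧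
    ∀ n : ℤ, HasDerivAt (fun t' => u t' n)
      (-((κ : ℂ) / 2) * (Complex.I * (n : ℂ) * u t n) +
        ((κ : ℂ) ^ 2 / 2) * (Complex.I * (n : ℂ) *
          (m n + conjFun m n - fmul m (conjFun m) n))) t)

/-- `u` is a global classical solution of the Benjamin–Ono equation with data `u₀`:
for every `T > 0` and `ε ∈ (0,ρ/6)` it lies in
`C¹([-T,T]; H₀^{ρ-3ε,1}) ∩ C([-T,T]; H₀^{ρ-ε,1})` and satisfies
`∂ₜu = -H∂ₓₓu - u∂ₓu` (time derivative in `H₀^{ρ-3ε,1}`). -/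
def IsBOSol (ρ : ℝ) (u₀ : ℤ → ℂ) (u : ℝ → ℤ → ℂ) : Prop :=
  u 0 = u₀ ∧
  (∀ t : ℝ, u t 0 = 0 ∧ IsReal (u t)) ∧
  ∀ T > (0 : ℝ), ∀ ε ∈ Set.Ioo (0 : ℝ) (ρ / 6),
    (∀ t ∈ Set.Icc (-T) T, MemH (ρ - ε) 1 (u t)) ∧
    (∀ t₀ ∈ Set.Icc (-T) T,
      Filter.Tendsto (fun t => anorm (ρ - ε) 1 (fun n => u t n - u t₀ n))
        (nhdsWithin t₀ (Set.Icc (-T) T)) (nhds 0)) ∧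
    (∀ t₀ ∈ Set.Icc (-T) T, MemH (ρ - 3 * ε) 1 (BOrhs (u t₀)) ∧
      Filter.Tendsto (fun t =>
          anorm (ρ - 3 * ε) 1
            (fun n => u t n - u t₀ n - ((t - t₀ : ℝ) : ℂ) * BOrhs (u t₀) n) / |t - t₀|)
        (nhdsWithin t₀ (Set.Icc (-T) T \ {t₀})) (nhds 0)) ∧
    (∀ t₀ ∈ Set.Icc (-T) T,
      Filter.Tendsto (fun t => anorm (ρ - 3 * ε) 1 (fun n => BOrhs (u t) n - BOrhs (u t₀) n))
        (nhdsWithin t₀ (Set.Icc (-T) T)) (nhds 0))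

/-!
For `s > 1/2` the space `H^{ρ,s}` is an algebra, `‖u f‖ ≤ C_s ‖u‖ ‖f‖`: the weight of a frequency
`n = (n - m) + m` is split onto the larger of the two parts, and each of the two resulting
convolutions is an `ℓ² * ℓ¹` product (Young), the `ℓ¹` factor `⟨m⟩^{-s} ⟨m⟩^s e^{ρ|m|} |f(m)|`
being controlled by Cauchy–Schwarz. Hence `T = -T_u R₀(κ)` has norm at most `r = C_s ‖u‖ / κ < 1`
on `H^{ρ,s}`.

If `(L_u + κ) f = g` with `f ∈ H₊`, then `w = g - T_u f` satisfies `f = R₀(κ) w` and `w - T w = g`.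
So `‖w‖ ≤ ‖g‖ / (1 - r)`, which gives uniqueness and the norm bound, and
`w - Σ_{j<N} T^j g = T^N w`, which gives the convergence of the Neumann partial sums. Conversely
the Neumann series `w = Σ_j T^j g` solves `w - T w = g`, and then `f = R₀(κ) w` solves
`(L_u + κ) f = g`. Thus `L_u + κ : H₊^{ρ,s+1} → H₊^{ρ,s}` is a linear bijection; the resolvent is
its inverse composed with a linear projection onto `H₊^{ρ,s}`, whose values off `H₊^{ρ,s}` play
no role.
-/

section L2

variable {ι β : Type*}

lemma memℓp_two_iff {f : ι → ℝ} : Memℓp f 2 ↔ Summable fun i => f i ^ 2 := by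
  rw [memℓp_gen_iff (by norm_num)]
  simp

lemma lp_two_norm_eq (f : lp (fun _ : ι => ℝ) 2) : ‖f‖ = √(∑' i, f i ^ 2) := by
  rw [lp.norm_eq_tsum_rpow (by norm_num), Real.sqrt_eq_rpow]
  simp

lemma summable_sq_and_sqrt_tsum_sq_le_mul {c : ℝ} {x y : ι → ℝ} (hc : 0 ≤ c)
    (hx : ∀ i, 0 ≤ x i) (hxy : ∀ i, x i ≤ c * y i) (hy : Summable fun i => y i ^ 2) :
    Summable (fun i => x i ^ 2) ∧ √(∑' i, x i ^ 2) ≤ c * √(∑' i, y i ^ 2) := by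
  have hsq : ∀ i, x i ^ 2 ≤ c ^ 2 * y i ^ 2 := fun i => by
    rw [← mul_pow]
    exact pow_le_pow_left₀ (hx i) (hxy i) 2
  have hsum : Summable fun i => x i ^ 2 :=
    (hy.mul_left (c ^ 2)).of_nonneg_of_le (fun i => sq_nonneg _) hsq
  refine ⟨hsum, ?_⟩
  rw [← Real.sqrt_sq hc, ← Real.sqrt_mul (sq_nonneg c), ← tsum_mul_left]
  exact Real.sqrt_le_sqrt (hsum.tsum_le_tsum hsq (hy.mul_left _))

lemma summable_mul_and_tsum_mul_le {a b : ι → ℝ} (ha0 : ∀ i, 0 ≤ a i) (hb0 : ∀ i, 0 ≤ b i)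
    (ha : Summable fun i => a i ^ 2) (hb : Summable fun i => b i ^ 2) :
    Summable (fun i => a i * b i) ∧ ∑' i, a i * b i ≤ √(∑' i, a i ^ 2) * √(∑' i, b i ^ 2) := by
  simpa [Real.sqrt_eq_rpow] using
    Real.summable_and_inner_le_Lp_mul_Lq_tsum_of_nonneg Real.HolderConjugate.two_two ha0 hb0
      (by simpa using ha) (by simpa using hb)

lemma summable_add_sq_and_sqrt_tsum_le {a b : ι → ℝ} (ha : Summable fun i => a i ^ 2)
    (hb : Summable fun i => b i ^ 2) :
    Summable (fun i => (a i + b i) ^ 2) ∧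
      √(∑' i, (a i + b i) ^ 2) ≤ √(∑' i, a i ^ 2) + √(∑' i, b i ^ 2) := by
  let A : lp (fun _ : ι => ℝ) 2 := ⟨a, memℓp_two_iff.2 ha⟩
  let B : lp (fun _ : ι => ℝ) 2 := ⟨b, memℓp_two_iff.2 hb⟩
  have h := norm_add_le A B
  simp only [lp_two_norm_eq] at h
  exact ⟨memℓp_two_iff.1 (A + B).2, h⟩

lemma summable_tsum_and_sqrt_tsum_sq_le {a : β → ι → ℝ} (ha : ∀ j, Summable fun i => a j i ^ 2)
    (hB : Summable fun j => √(∑' i, a j i ^ 2)) :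
    (∀ i, Summable fun j => a j i) ∧ Summable (fun i => (∑' j, a j i) ^ 2) ∧
      √(∑' i, (∑' j, a j i) ^ 2) ≤ ∑' j, √(∑' i, a j i ^ 2) := by
  let F : β → lp (fun _ : ι => ℝ) 2 := fun j => ⟨a j, memℓp_two_iff.2 (ha j)⟩
  have hF : Summable fun j => ‖F j‖ := by simpa only [lp_two_norm_eq] using hB
  have heval : ∀ i, HasSum (fun j => a j i) ((∑' j, F j) i) :=
    fun i => hF.of_norm.hasSum.mapL (lp.evalCLM ℝ (fun _ : ι => ℝ) 2 i)
  have hS : ∀ i, ∑' j, a j i = (∑' j, F j) i := fun i => (heval i).tsum_eq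
  refine ⟨fun i => (heval i).summable, ?_, ?_⟩
  · simp_rw [hS]
    exact memℓp_two_iff.1 (∑' j, F j).2
  · simp_rw [hS, ← lp_two_norm_eq]
    simpa only [lp_two_norm_eq] using norm_tsum_le_tsum_norm hF

lemma young_convolution {a b : ℤ → ℝ} (hb0 : ∀ m, 0 ≤ b m) (ha : Summable fun n => a n ^ 2)
    (hb : Summable b) :
    (∀ n, Summable fun m => a (n - m) * b m) ∧ Summable (fun n => (∑' m, a (n - m) * b m) ^ 2) ∧
      √(∑' n, (∑' m, a (n - m) * b m) ^ 2) ≤ √(∑' n, a n ^ 2) * ∑' m, b m := by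
  have hshift : ∀ m, HasSum (fun n => (a (n - m) * b m) ^ 2) ((∑' n, a n ^ 2) * b m ^ 2) := by
    intro m
    simp_rw [mul_pow]
    exact (((Equiv.subRight m).hasSum_iff (f := fun n => a n ^ 2)).2 ha.hasSum).mul_right _
  have hnorm : ∀ m, √(∑' n, (a (n - m) * b m) ^ 2) = √(∑' n, a n ^ 2) * b m := by
    intro m
    rw [(hshift m).tsum_eq, Real.sqrt_mul (tsum_nonneg fun n => sq_nonneg _),
      Real.sqrt_sq (hb0 m)]
  obtain ⟨h1, h2, h3⟩ := summable_tsum_and_sqrt_tsum_sq_le (a := fun m n => a (n - m) * b m)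
    (fun m => (hshift m).summable) (by simpa only [hnorm] using hb.mul_left _)
  refine ⟨h1, h2, ?_⟩
  simpa only [hnorm, tsum_mul_left] using h3

lemma tsum_sub_mul_comm (a b : ℤ → ℝ) (n : ℤ) :
    ∑' m, a (n - m) * b m = ∑' m, b (n - m) * a m := by
  rw [← (Equiv.subLeft n).tsum_eq (fun m => b (n - m) * a m)]
  simp [mul_comm]

lemma summable_sub_mul_comm {a b : ℤ → ℝ} {n : ℤ} (h : Summable fun m => a (n - m) * b m) :
    Summable fun m => b (n - m) * a m := by
  refine (Equiv.subLeft n).summable_iff.1 (h.congr fun m => ?_)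
  simp [mul_comm]

lemma summable_and_sqrt_tsum_sq_le_of_le_conv_add_conv {c : ℝ} {x : ℤ → ℤ → ℝ}
    {a b a' b' : ℤ → ℝ} (hc : 0 ≤ c) (hx : ∀ n m, 0 ≤ x n m)
    (hxle : ∀ n m, x n m ≤ c * (a (n - m) * b m + b' (n - m) * a' m))
    (hb0 : ∀ m, 0 ≤ b m) (hb0' : ∀ m, 0 ≤ b' m) (ha : Summable fun n => a n ^ 2)
    (hb : Summable b) (ha' : Summable fun n => a' n ^ 2) (hb' : Summable b') :
    (∀ n, Summable (x n)) ∧ Summable (fun n => (∑' m, x n m) ^ 2) ∧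
      √(∑' n, (∑' m, x n m) ^ 2)
        ≤ c * (√(∑' n, a n ^ 2) * ∑' m, b m + √(∑' n, a' n ^ 2) * ∑' m, b' m) := by
  obtain ⟨h₁, h₁sq, h₁le⟩ := young_convolution hb0 ha hb
  obtain ⟨h₂, h₂sq, h₂le⟩ := young_convolution hb0' ha' hb'
  have hconv : ∀ n, HasSum (fun m => c * (a (n - m) * b m + b' (n - m) * a' m))
      (c * (∑' m, a (n - m) * b m + ∑' m, a' (n - m) * b' m)) := fun n => by
    rw [tsum_sub_mul_comm a' b' n]
    exact ((h₁ n).hasSum.add (summable_sub_mul_comm (h₂ n)).hasSum).mul_left c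
  have hxn : ∀ n, Summable (x n) := fun n =>
    (hconv n).summable.of_nonneg_of_le (hx n) (hxle n)
  obtain ⟨hsum, hle⟩ := summable_add_sq_and_sqrt_tsum_le h₁sq h₂sq
  obtain ⟨hxsq, hxle'⟩ := summable_sq_and_sqrt_tsum_sq_le_mul hc (fun n => tsum_nonneg (hx n))
    (fun n => ((hxn n).tsum_le_tsum (hxle n) (hconv n).summable).trans_eq (hconv n).tsum_eq)
    hsum
  exact ⟨hxn, hxsq, hxle'.trans (by gcongr; exact hle.trans (add_le_add h₁le h₂le))⟩

end L2

lemma jb_pos (n : ℤ) : 0 < jb n := Real.sqrt_pos.2 (by positivity)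

lemma one_le_jb (n : ℤ) : 1 ≤ jb n := Real.one_le_sqrt.2 (by nlinarith)

lemma abs_le_jb (n : ℤ) : |(n : ℝ)| ≤ jb n := Real.abs_le_sqrt (by linarith)

lemma jb_add_le (a b : ℤ) : jb (a + b) ≤ jb a + jb b := by
  have ha := Real.sq_sqrt (show (0 : ℝ) ≤ 1 + (a : ℝ) ^ 2 by positivity)
  have hab : (a : ℝ) * b ≤ jb a * |(b : ℝ)| := by
    calc (a : ℝ) * b ≤ |(a : ℝ)| * |(b : ℝ)| := by rw [← abs_mul]; exact le_abs_self _
      _ ≤ jb a * |(b : ℝ)| := by gcongr; exact abs_le_jb a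
  calc jb (a + b) ≤ jb a + |(b : ℝ)| := by
        refine Real.sqrt_le_iff.2 ⟨add_nonneg (jb_pos a).le (abs_nonneg _), ?_⟩
        push_cast
        nlinarith [sq_abs (b : ℝ), show jb a ^ 2 = 1 + (a : ℝ) ^ 2 from ha]
    _ ≤ jb a + jb b := by gcongr; exact abs_le_jb b

lemma jb_le_two_mul {n : ℤ} (hn : 0 < n) : jb n ≤ 2 * n := by
  have h1 : (1 : ℝ) ≤ n := by exact_mod_cast hn
  exact Real.sqrt_le_iff.2 ⟨by linarith, by nlinarith⟩

lemma summable_jb_rpow {s : ℝ} (hs : 1 / 2 < s) : Summable fun n : ℤ => jb n ^ (-(2 * s)) := by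
  refine (Real.summable_abs_int_rpow (b := 2 * s) (by linarith)).of_norm_bounded_eventually ?_
  filter_upwards [(Set.finite_singleton (0 : ℤ)).compl_mem_cofinite] with n hn
  have hn : 0 < |(n : ℝ)| := by simpa using hn
  rw [Real.norm_of_nonneg (Real.rpow_nonneg (jb_pos n).le _), Real.rpow_neg hn.le,
    ← Real.rpow_neg hn.le]
  exact Real.rpow_le_rpow_of_nonpos hn (abs_le_jb n) (by linarith)

lemma wt_pos (ρ s : ℝ) (n : ℤ) : 0 < wt ρ s n := by unfold wt; have := jb_pos n; positivity

lemma wt_le_wt {ρ s s' : ℝ} (hss' : s ≤ s') (n : ℤ) : wt ρ s n ≤ wt ρ s' n := by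
  unfold wt
  gcongr
  exact one_le_jb n

lemma wt_add_one (ρ s : ℝ) (n : ℤ) : wt ρ (s + 1) n = jb n * wt ρ s n := by
  rw [wt, wt, Real.rpow_add_one (jb_pos n).ne' s]
  ring

lemma jb_rpow_neg_mul_wt (ρ s : ℝ) (n : ℤ) :
    jb n ^ (-s) * wt ρ s n = Real.exp (ρ * |(n : ℝ)|) := by
  rw [wt, ← mul_assoc, ← Real.rpow_add (jb_pos n), neg_add_cancel, Real.rpow_zero, one_mul]

lemma add_rpow_le_two_rpow_mul {x y s : ℝ} (hx : 0 ≤ x) (hy : 0 ≤ y) (hs : 0 ≤ s) :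
    (x + y) ^ s ≤ 2 ^ s * (x ^ s + y ^ s) := by
  calc (x + y) ^ s ≤ (2 * max x y) ^ s := by gcongr; linarith [le_max_left x y, le_max_right x y]
    _ = 2 ^ s * max x y ^ s := Real.mul_rpow (by norm_num) (le_max_of_le_left hx)
    _ ≤ 2 ^ s * (x ^ s + y ^ s) := by
        gcongr
        rcases max_choice x y with h | h <;> rw [h]
        · exact le_add_of_nonneg_right (Real.rpow_nonneg hy s)
        · exact le_add_of_nonneg_left (Real.rpow_nonneg hx s)

lemma wt_le_two_rpow_mul {ρ s : ℝ} (hρ : 0 ≤ ρ) (hs : 0 ≤ s) (n m : ℤ) :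
    wt ρ s n ≤ 2 ^ s * (wt ρ s (n - m) * (jb m ^ (-s) * wt ρ s m)
      + jb (n - m) ^ (-s) * wt ρ s (n - m) * wt ρ s m) := by
  have hjb : jb n ^ s ≤ 2 ^ s * (jb (n - m) ^ s + jb m ^ s) :=
    calc jb n ^ s ≤ (jb (n - m) + jb m) ^ s := by
          gcongr
          · exact (jb_pos n).le
          · simpa using jb_add_le (n - m) m
      _ ≤ _ := add_rpow_le_two_rpow_mul (jb_pos _).le (jb_pos _).le hs
  have hexp : Real.exp (ρ * |(n : ℝ)|)
      ≤ Real.exp (ρ * |((n - m : ℤ) : ℝ)|) * Real.exp (ρ * |(m : ℝ)|) := by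
    rw [← Real.exp_add, ← mul_add]
    gcongr
    push_cast
    simpa using abs_add_le ((n : ℝ) - m) m
  rw [jb_rpow_neg_mul_wt, jb_rpow_neg_mul_wt]
  calc wt ρ s n ≤ (2 ^ s * (jb (n - m) ^ s + jb m ^ s)) *
        (Real.exp (ρ * |((n - m : ℤ) : ℝ)|) * Real.exp (ρ * |(m : ℝ)|)) := by
        unfold wt
        have := jb_pos (n - m)
        have := jb_pos m
        gcongr
    _ = _ := by unfold wt; ring

section Sobolev

variable {ρ s : ℝ}

lemma memH_iff {v : ℤ → ℂ} : MemH ρ s v ↔ Summable fun n => (wt ρ s n * ‖v n‖) ^ 2 := by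
  simp only [MemH, mul_pow]

lemma anorm_eq (v : ℤ → ℂ) : anorm ρ s v = √(∑' n, (wt ρ s n * ‖v n‖) ^ 2) := by
  simp only [anorm, mul_pow]

lemma anorm_nonneg (v : ℤ → ℂ) : 0 ≤ anorm ρ s v := Real.sqrt_nonneg _

lemma anorm_neg (v : ℤ → ℂ) : anorm ρ s (-v) = anorm ρ s v := by
  simp [anorm]

lemma wt_mul_norm_le_anorm {v : ℤ → ℂ} (hv : MemH ρ s v) (n : ℤ) :
    wt ρ s n * ‖v n‖ ≤ anorm ρ s v := by
  rw [anorm_eq]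
  exact (le_abs_self _).trans
    (Real.abs_le_sqrt ((memH_iff.1 hv).le_tsum n fun _ _ => sq_nonneg _))

lemma eq_zero_of_anorm_eq_zero {v : ℤ → ℂ} (hv : MemH ρ s v) (h : anorm ρ s v = 0) : v = 0 := by
  funext n
  have h1 := wt_mul_norm_le_anorm hv n
  rw [h] at h1
  exact norm_le_zero_iff.1 (nonpos_of_mul_nonpos_right h1 (wt_pos ρ s n))

lemma memH_and_anorm_le_mul_sqrt {c : ℝ} {v : ℤ → ℂ} {y : ℤ → ℝ} (hc : 0 ≤ c)
    (hy : Summable fun n => y n ^ 2) (hvy : ∀ n, wt ρ s n * ‖v n‖ ≤ c * y n) :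
    MemH ρ s v ∧ anorm ρ s v ≤ c * √(∑' n, y n ^ 2) := by
  rw [memH_iff, anorm_eq]
  exact summable_sq_and_sqrt_tsum_sq_le_mul hc
    (fun n => mul_nonneg (wt_pos ρ s n).le (norm_nonneg _)) hvy hy

lemma memH_and_anorm_le_mul {ρ' s' c : ℝ} {v w : ℤ → ℂ} (hw : MemH ρ' s' w) (hc : 0 ≤ c)
    (hvw : ∀ n, wt ρ s n * ‖v n‖ ≤ c * (wt ρ' s' n * ‖w n‖)) :
    MemH ρ s v ∧ anorm ρ s v ≤ c * anorm ρ' s' w := by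
  rw [anorm_eq w]
  exact memH_and_anorm_le_mul_sqrt hc (memH_iff.1 hw) hvw

lemma MemH.mono {s' : ℝ} {v : ℤ → ℂ} (hss' : s ≤ s') (hv : MemH ρ s' v) :
    MemH ρ s v ∧ anorm ρ s v ≤ anorm ρ s' v := by
  simpa using memH_and_anorm_le_mul hv zero_le_one fun n =>
    by rw [one_mul]; gcongr; exact wt_le_wt hss' n

lemma MemHplus.of_add_one {v : ℤ → ℂ} (hv : MemHplus ρ (s + 1) v) : MemHplus ρ s v :=
  ⟨(MemH.mono (by linarith) hv.1).1, hv.2⟩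

lemma memH_add_and_anorm_add_le {v w : ℤ → ℂ} (hv : MemH ρ s v) (hw : MemH ρ s w) :
    MemH ρ s (v + w) ∧ anorm ρ s (v + w) ≤ anorm ρ s v + anorm ρ s w := by
  obtain ⟨hsum, hle⟩ := summable_add_sq_and_sqrt_tsum_le (memH_iff.1 hv) (memH_iff.1 hw)
  refine (memH_and_anorm_le_mul_sqrt zero_le_one hsum fun n => ?_).imp_right fun h => ?_
  · rw [one_mul, ← mul_add]
    exact mul_le_mul_of_nonneg_left (norm_add_le _ _) (wt_pos ρ s n).le
  · rw [anorm_eq v, anorm_eq w]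
    linarith

lemma memH_smul_and_anorm_smul_le (c : ℂ) {v : ℤ → ℂ} (hv : MemH ρ s v) :
    MemH ρ s (c • v) ∧ anorm ρ s (c • v) ≤ ‖c‖ * anorm ρ s v :=
  memH_and_anorm_le_mul hv (norm_nonneg c) fun n => by
    rw [Pi.smul_apply, norm_smul]
    exact (mul_left_comm _ _ _).le

lemma memH_sub_and_anorm_sub_le {v w : ℤ → ℂ} (hv : MemH ρ s v) (hw : MemH ρ s w) :
    MemH ρ s (v - w) ∧ anorm ρ s (v - w) ≤ anorm ρ s v + anorm ρ s w := by
  obtain ⟨hw', hw'le⟩ := memH_smul_and_anorm_smul_le (-1) hw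
  rw [neg_one_smul, norm_neg, norm_one, one_mul] at *
  rw [sub_eq_add_neg]
  obtain ⟨h1, h2⟩ := memH_add_and_anorm_add_le hv hw'
  exact ⟨h1, h2.trans (by linarith)⟩

lemma memH_tsum_and_anorm_tsum_le {c : ℕ → ℤ → ℂ} (hc : ∀ j, MemH ρ s (c j))
    (hsum : Summable fun j => anorm ρ s (c j)) :
    (∀ n, Summable fun j => c j n) ∧ MemH ρ s (fun n => ∑' j, c j n) ∧
      anorm ρ s (fun n => ∑' j, c j n) ≤ ∑' j, anorm ρ s (c j) := by
  obtain ⟨hpt, hsq, hle⟩ := summable_tsum_and_sqrt_tsum_sq_le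
    (a := fun j n => wt ρ s n * ‖c j n‖) (fun j => memH_iff.1 (hc j))
    (by simpa only [anorm_eq] using hsum)
  have hnorm : ∀ n, Summable fun j => ‖c j n‖ := fun n => by
    simpa [← mul_assoc, (wt_pos ρ s n).ne'] using (hpt n).mul_left (wt ρ s n)⁻¹
  refine ⟨fun n => (hnorm n).of_norm, ?_⟩
  simp only [← anorm_eq] at hle
  refine (memH_and_anorm_le_mul_sqrt zero_le_one hsq fun n => ?_).imp_right
    fun h => by linarith
  rw [one_mul, tsum_mul_left]
  exact mul_le_mul_of_nonneg_left (norm_tsum_le_tsum_norm (hnorm n)) (wt_pos ρ s n).le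

end Sobolev

lemma summable_jb_rpow_neg_mul_and_tsum_le {ρ s : ℝ} (hs : 1 / 2 < s) {f : ℤ → ℂ}
    (hf : MemH ρ s f) :
    Summable (fun m => jb m ^ (-s) * (wt ρ s m * ‖f m‖)) ∧
      ∑' m, jb m ^ (-s) * (wt ρ s m * ‖f m‖) ≤ √(∑' m, jb m ^ (-(2 * s))) * anorm ρ s f := by
  have hsq : ∀ m, (jb m ^ (-s)) ^ 2 = jb m ^ (-(2 * s)) := fun m => by
    rw [← Real.rpow_natCast, ← Real.rpow_mul (jb_pos m).le]
    ring_nf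
  have h := summable_mul_and_tsum_mul_le (a := fun m => jb m ^ (-s))
    (fun m => Real.rpow_nonneg (jb_pos m).le _)
    (fun m => mul_nonneg (wt_pos ρ s m).le (norm_nonneg _))
    (by simpa only [hsq] using summable_jb_rpow hs) (memH_iff.1 hf)
  simp only [hsq] at h
  rwa [anorm_eq]

lemma Cs_nonneg (s : ℝ) : 0 ≤ Cs s := by unfold Cs; positivity

lemma memH_fmul {ρ s : ℝ} (hρ : 0 ≤ ρ) (hs : 1 / 2 < s) {u f : ℤ → ℂ} (hu : MemH ρ s u)
    (hf : MemH ρ s f) :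
    (∀ n, Summable fun m => u (n - m) * f m) ∧ MemH ρ s (fmul u f) ∧
      anorm ρ s (fmul u f) ≤ Cs s * anorm ρ s u * anorm ρ s f := by
  have hG0 : ∀ m, 0 ≤ jb m ^ (-s) := fun m => Real.rpow_nonneg (jb_pos m).le _
  obtain ⟨hGF, hGFle⟩ := summable_jb_rpow_neg_mul_and_tsum_le hs hf
  obtain ⟨hGU, hGUle⟩ := summable_jb_rpow_neg_mul_and_tsum_le hs hu
  obtain ⟨hx, hxsq, hxle⟩ := summable_and_sqrt_tsum_sq_le_of_le_conv_add_conv (c := 2 ^ s)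
    (x := fun n m => wt ρ s n * (‖u (n - m)‖ * ‖f m‖)) (a := fun n => wt ρ s n * ‖u n‖)
    (b := fun m => jb m ^ (-s) * (wt ρ s m * ‖f m‖)) (a' := fun n => wt ρ s n * ‖f n‖)
    (b' := fun m => jb m ^ (-s) * (wt ρ s m * ‖u m‖)) (by positivity)
    (fun n m => mul_nonneg (wt_pos ρ s n).le (by positivity))
    (fun n m => (mul_le_mul_of_nonneg_right (wt_le_two_rpow_mul hρ (by linarith) n m)
      (by positivity)).trans_eq (by ring))
    (fun m => mul_nonneg (hG0 m) (mul_nonneg (wt_pos ρ s m).le (norm_nonneg _)))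
    (fun m => mul_nonneg (hG0 m) (mul_nonneg (wt_pos ρ s m).le (norm_nonneg _)))
    (memH_iff.1 hu) hGF (memH_iff.1 hf) hGU
  have habs : ∀ n, Summable fun m => ‖u (n - m)‖ * ‖f m‖ := fun n => by
    simpa [← mul_assoc, (wt_pos ρ s n).ne'] using (hx n).mul_left (wt ρ s n)⁻¹
  have hpt : ∀ n, wt ρ s n * ‖fmul u f n‖ ≤ 1 * ∑' m, wt ρ s n * (‖u (n - m)‖ * ‖f m‖) :=
    fun n => by
      rw [one_mul, tsum_mul_left]
      gcongr
      · exact (wt_pos ρ s n).le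
      · simpa only [fmul, norm_mul] using norm_tsum_le_tsum_norm
          (f := fun m => u (n - m) * f m) (by simpa only [norm_mul] using habs n)
  refine ⟨fun n => (habs n).of_norm_bounded fun m => (norm_mul _ _).le, ?_⟩
  refine (memH_and_anorm_le_mul_sqrt zero_le_one hxsq hpt).imp_right fun h => ?_
  rw [← anorm_eq, ← anorm_eq] at hxle
  have hu0 := anorm_nonneg (ρ := ρ) (s := s) u
  have hf0 := anorm_nonneg (ρ := ρ) (s := s) f
  calc anorm ρ s (fmul u f)
      ≤ 2 ^ s * (anorm ρ s u * (√(∑' m, jb m ^ (-(2 * s))) * anorm ρ s f)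
        + anorm ρ s f * (√(∑' m, jb m ^ (-(2 * s))) * anorm ρ s u)) := by
        rw [one_mul] at h
        refine h.trans (hxle.trans ?_)
        have := Real.sqrt_nonneg (∑' m, jb m ^ (-(2 * s)))
        gcongr
    _ = _ := by rw [Cs, Real.rpow_add_one two_ne_zero]; ring

section Operators

variable {ρ s κ : ℝ} {u : ℤ → ℂ}

lemma Cplus_eq_zero (v : ℤ → ℂ) {n : ℤ} (hn : n ≤ 0) : Cplus v n = 0 := by
  simp [Cplus, not_lt.2 hn]

lemma norm_Cplus_le (v : ℤ → ℂ) (n : ℤ) : ‖Cplus v n‖ ≤ ‖v n‖ := by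
  unfold Cplus
  split_ifs <;> simp

lemma memH_toep (hρ : 0 ≤ ρ) (hs : 1 / 2 < s) (hu : MemH ρ s u) {f : ℤ → ℂ} (hf : MemH ρ s f) :
    MemH ρ s (Toep u f) ∧ anorm ρ s (Toep u f) ≤ Cs s * anorm ρ s u * anorm ρ s f := by
  obtain ⟨-, hmem, hle⟩ := memH_fmul hρ hs hu hf
  refine (memH_and_anorm_le_mul hmem zero_le_one fun n => ?_).imp_right fun h => by linarith
  rw [one_mul]
  exact mul_le_mul_of_nonneg_left (norm_Cplus_le _ n) (wt_pos ρ s n).le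

lemma Toep_add (hρ : 0 ≤ ρ) (hs : 1 / 2 < s) (hu : MemH ρ s u) {v w : ℤ → ℂ} (hv : MemH ρ s v)
    (hw : MemH ρ s w) : Toep u (v + w) = Toep u v + Toep u w := by
  funext n
  simp only [Toep, Cplus, fmul, Pi.add_apply, mul_add]
  split_ifs
  · exact ((memH_fmul hρ hs hu hv).1 n).tsum_add ((memH_fmul hρ hs hu hw).1 n)
  · simp

lemma Toep_smul (c : ℂ) (v : ℤ → ℂ) : Toep u (c • v) = c • Toep u v := by
  funext n
  simp only [Toep, Cplus, fmul, Pi.smul_apply, smul_eq_mul, mul_left_comm _ c, tsum_mul_left]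
  split_ifs <;> simp

lemma R0_eq_zero (g : ℤ → ℂ) {n : ℤ} (hn : n ≤ 0) : R0 κ g n = 0 := by
  simp [R0, not_lt.2 hn]

lemma two_mul_add_ne_zero (hκ : 0 ≤ κ) {n : ℤ} (hn : 0 < n) : 2 * (n : ℂ) + κ ≠ 0 := by
  have h : (0 : ℝ) < 2 * n + κ := by linarith [(Int.cast_pos.2 hn : (0 : ℝ) < n)]
  exact_mod_cast h.ne'

lemma norm_two_mul_add (hκ : 0 ≤ κ) {n : ℤ} (hn : 0 < n) : ‖2 * (n : ℂ) + κ‖ = 2 * n + κ := by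
  have h : (0 : ℝ) ≤ 2 * n + κ := by linarith [(Int.cast_pos.2 hn : (0 : ℝ) < n)]
  exact_mod_cast Complex.norm_of_nonneg h

lemma memH_R0 (hκ : 0 < κ) {g : ℤ → ℂ} (hg : MemH ρ s g) :
    MemH ρ s (R0 κ g) ∧ anorm ρ s (R0 κ g) ≤ κ⁻¹ * anorm ρ s g := by
  refine memH_and_anorm_le_mul hg (inv_nonneg.2 hκ.le) fun n => ?_
  rw [mul_left_comm]
  refine mul_le_mul_of_nonneg_left ?_ (wt_pos ρ s n).le
  unfold R0
  split_ifs with hn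
  · rw [norm_mul, norm_inv, norm_two_mul_add hκ.le hn]
    gcongr
    linarith [(Int.cast_pos.2 hn : (0 : ℝ) < n)]
  · simp only [norm_zero]
    positivity

lemma memHplus_R0_add_one (hκ : 0 ≤ κ) {g : ℤ → ℂ} (hg : MemH ρ s g) :
    MemHplus ρ (s + 1) (R0 κ g) := by
  refine ⟨(memH_and_anorm_le_mul hg zero_le_one fun n => ?_).1, fun n hn => R0_eq_zero g hn⟩
  rw [one_mul, wt_add_one, mul_comm (jb n), mul_assoc]
  refine mul_le_mul_of_nonneg_left ?_ (wt_pos ρ s n).le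
  unfold R0
  split_ifs with hn
  · rw [norm_mul, norm_inv, norm_two_mul_add hκ hn, ← mul_assoc]
    refine mul_le_of_le_one_left (norm_nonneg _) ?_
    rw [mul_inv_le_iff₀ (by linarith [(Int.cast_pos.2 hn : (0 : ℝ) < n)]), one_mul]
    linarith [jb_le_two_mul hn]
  · simp

lemma R0_two_mul_add_mul (hκ : 0 ≤ κ) {f : ℤ → ℂ} (hf : ∀ n ≤ 0, f n = 0) :
    R0 κ (fun n => (2 * n + κ) * f n) = f := by
  funext n
  unfold R0
  split_ifs with hn
  · rw [← mul_assoc, inv_mul_cancel₀ (two_mul_add_ne_zero hκ hn), one_mul]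
  · exact (hf n (not_lt.1 hn)).symm

def freeResolvent (κ : ℝ) : (ℤ → ℂ) →ₗ[ℂ] (ℤ → ℂ) where
  toFun := R0 κ
  map_add' v w := by
    funext n
    simp only [R0, Pi.add_apply]
    split_ifs <;> simp [mul_add]
  map_smul' c v := by
    funext n
    simp only [R0, Pi.smul_apply, smul_eq_mul, RingHom.id_apply]
    split_ifs <;> simp [mul_left_comm]

end Operators

def sobolev (ρ s : ℝ) : Submodule ℂ (ℤ → ℂ) where
  carrier := {v | MemH ρ s v}
  add_mem' hv hw := (memH_add_and_anorm_add_le hv hw).1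
  zero_mem' := memH_iff.2 (by simp)
  smul_mem' c _ hv := (memH_smul_and_anorm_smul_le c hv).1

lemma mem_sobolev {ρ s : ℝ} {v : ℤ → ℂ} : v ∈ sobolev ρ s ↔ MemH ρ s v := Iff.rfl

lemma anorm_coe_sub_le {ρ s : ℝ} (x y : sobolev ρ s) :
    anorm ρ s ↑(x - y) ≤ anorm ρ s x + anorm ρ s y :=
  (memH_sub_and_anorm_sub_le x.2 y.2).2

def hardySobolev (ρ s : ℝ) : Submodule ℂ (ℤ → ℂ) where
  carrier := {v | MemHplus ρ s v}
  add_mem' hv hw := ⟨(sobolev ρ s).add_mem hv.1 hw.1, fun n hn => by simp [hv.2 n hn, hw.2 n hn]⟩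
  zero_mem' := ⟨(sobolev ρ s).zero_mem, fun _ _ => rfl⟩
  smul_mem' c _ hv := ⟨(sobolev ρ s).smul_mem c hv.1, fun n hn => by simp [hv.2 n hn]⟩

lemma sub_geom_sum_apply_of_sub_apply_eq {R M : Type*} [Ring R] [AddCommGroup M] [Module R M]
    {T : Module.End R M} {w g : M} (h : w - T w = g) (N : ℕ) :
    w - (∑ i ∈ Finset.range N, T ^ i) g = (T ^ N) w := by
  have := LinearMap.congr_fun (geom_sum_mul_neg T N) w
  simp only [Module.End.mul_apply, LinearMap.sub_apply, Module.End.one_apply, h] at this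
  rw [this, sub_sub_cancel]

section Neumann

variable {ρ s r : ℝ} {T : Module.End ℂ (sobolev ρ s)}

lemma anorm_pow_apply_le (hr : 0 ≤ r) (hT : ∀ v, anorm ρ s (T v) ≤ r * anorm ρ s v) (N : ℕ)
    (v : sobolev ρ s) : anorm ρ s ((T ^ N) v) ≤ r ^ N * anorm ρ s v := by
  induction N with
  | zero => simp
  | succ N ih =>
    rw [pow_succ', Module.End.mul_apply, pow_succ', mul_assoc]
    exact (hT _).trans (mul_le_mul_of_nonneg_left ih hr)

lemma anorm_le_of_sub_apply_eq (hr : r < 1) (hT : ∀ v, anorm ρ s (T v) ≤ r * anorm ρ s v)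
    {w g : sobolev ρ s} (h : w - T w = g) : anorm ρ s w ≤ (1 - r)⁻¹ * anorm ρ s g := by
  have hw : (w : ℤ → ℂ) = g + T w := by rw [← h]; simp
  have := (memH_add_and_anorm_add_le g.2 (T w).2).2
  rw [← hw] at this
  rw [le_inv_mul_iff₀ (by linarith)]
  linarith [hT w]

lemma summable_pow_add_apply_and_anorm_tsum_le (hr0 : 0 ≤ r) (hr : r < 1)
    (hT : ∀ v, anorm ρ s (T v) ≤ r * anorm ρ s v) (g : sobolev ρ s) (N : ℕ) :
    (∀ n, Summable fun j => ((T ^ (j + N)) g : ℤ → ℂ) n) ∧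
      MemH ρ s (fun n => ∑' j, ((T ^ (j + N)) g : ℤ → ℂ) n) ∧
      anorm ρ s (fun n => ∑' j, ((T ^ (j + N)) g : ℤ → ℂ) n)
        ≤ r ^ N * ((1 - r)⁻¹ * anorm ρ s g) := by
  have hle : ∀ j, anorm ρ s ((T ^ (j + N)) g) ≤ r ^ N * anorm ρ s g * r ^ j := fun j =>
    (anorm_pow_apply_le hr0 hT (j + N) g).trans_eq (by ring)
  have hgeo := (summable_geometric_of_lt_one hr0 hr).mul_left (r ^ N * anorm ρ s g)
  have hsum := hgeo.of_nonneg_of_le (fun j => anorm_nonneg _) hle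
  obtain ⟨h1, h2, h3⟩ := memH_tsum_and_anorm_tsum_le (fun j => ((T ^ (j + N)) g).2) hsum
  refine ⟨h1, h2, h3.trans ?_⟩
  calc ∑' j, anorm ρ s ((T ^ (j + N)) g) ≤ ∑' j, r ^ N * anorm ρ s g * r ^ j :=
        hsum.tsum_le_tsum hle hgeo
    _ = _ := by rw [tsum_mul_left, tsum_geometric_of_lt_one hr0 hr]; ring

lemma exists_sub_apply_eq (hr0 : 0 ≤ r) (hr : r < 1)
    (hT : ∀ v, anorm ρ s (T v) ≤ r * anorm ρ s v) (g : sobolev ρ s) : ∃ w, w - T w = g := by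
  have htail := summable_pow_add_apply_and_anorm_tsum_le hr0 hr hT g
  let w : sobolev ρ s := ⟨fun n => ∑' j, ((T ^ j) g : ℤ → ℂ) n,
    mem_sobolev.2 (by simpa using (htail 0).2.1)⟩
  refine ⟨w, ?_⟩
  have hpartial : ∀ N, anorm ρ s ↑(w - (∑ i ∈ Finset.range N, T ^ i) g)
      ≤ r ^ N * ((1 - r)⁻¹ * anorm ρ s g) := fun N => by
    convert (htail N).2.2 using 2
    funext n
    have := ((htail 0).1 n).sum_add_tsum_nat_add N
    simp only [add_zero] at this
    simp [w, ← this]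
  have hres : ∀ N, anorm ρ s ↑(w - T w - g)
      ≤ r ^ N * ((1 + r) * ((1 - r)⁻¹ * anorm ρ s g) + anorm ρ s g) := fun N => by
    set x := w - (∑ i ∈ Finset.range N, T ^ i) g
    have hgeom := LinearMap.congr_fun (mul_neg_geom_sum T N) g
    simp only [Module.End.mul_apply, LinearMap.sub_apply, Module.End.one_apply] at hgeom
    have hx : w - T w - g = (x - T x) - (T ^ N) g := by
      simp only [x, map_sub]
      rw [← sub_eq_zero, ← sub_eq_zero.2 hgeom]
      abel
    rw [hx]
    calc anorm ρ s ↑(x - T x - (T ^ N) g)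
        ≤ (anorm ρ s x + anorm ρ s (T x)) + anorm ρ s ((T ^ N) g) :=
          (anorm_coe_sub_le _ _).trans (by gcongr; exact anorm_coe_sub_le _ _)
      _ ≤ (1 + r) * anorm ρ s x + r ^ N * anorm ρ s g := by
          linarith [hT x, anorm_pow_apply_le hr0 hT N g]
      _ ≤ (1 + r) * (r ^ N * ((1 - r)⁻¹ * anorm ρ s g)) + r ^ N * anorm ρ s g := by
          gcongr
          exact hpartial N
      _ = _ := by ring
  have hlim : Tendsto (fun N => r ^ N * ((1 + r) * ((1 - r)⁻¹ * anorm ρ s g) + anorm ρ s g))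
      atTop (𝓝 0) := by
    simpa using (tendsto_pow_atTop_nhds_zero_of_lt_one hr0 hr).mul_const
      ((1 + r) * ((1 - r)⁻¹ * anorm ρ s g) + anorm ρ s g)
  exact sub_eq_zero.1 (Submodule.coe_eq_zero.1 (eq_zero_of_anorm_eq_zero (w - T w - g).2
    (le_antisymm (ge_of_tendsto' hlim hres) (anorm_nonneg _))))

end Neumann

section Lax

variable {ρ s κ : ℝ} {u : ℤ → ℂ}

def toeplitz (hρ : 0 ≤ ρ) (hs : 1 / 2 < s) (hu : MemH ρ s u) : Module.End ℂ (sobolev ρ s) where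
  toFun v := ⟨Toep u v, (memH_toep hρ hs hu v.2).1⟩
  map_add' v w := Subtype.ext (Toep_add hρ hs hu v.2 w.2)
  map_smul' c v := Subtype.ext (Toep_smul c v)

/-- `-T_u R₀(κ)`: on `H₊^{ρ,s}` one has `(L_u + κ) R₀(κ) = 1 - neumannOp`. -/
def neumannOp (hρ : 0 ≤ ρ) (hs : 1 / 2 < s) (hu : MemH ρ s u) (hκ : 0 < κ) :
    Module.End ℂ (sobolev ρ s) :=
  -(toeplitz hρ hs hu ∘ₗ (freeResolvent κ).restrict fun _ hv => (memH_R0 hκ hv).1)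

lemma coe_neumannOp_apply (hρ : 0 ≤ ρ) (hs : 1 / 2 < s) (hu : MemH ρ s u) (hκ : 0 < κ)
    (v : sobolev ρ s) : (neumannOp hρ hs hu hκ v : ℤ → ℂ) = -Toep u (R0 κ v) := rfl

lemma anorm_neumannOp_apply_le (hρ : 0 ≤ ρ) (hs : 1 / 2 < s) (hu : MemH ρ s u) (hκ : 0 < κ)
    (v : sobolev ρ s) :
    anorm ρ s (neumannOp hρ hs hu hκ v) ≤ Cs s * anorm ρ s u * κ⁻¹ * anorm ρ s v := by
  obtain ⟨hR, hRle⟩ := memH_R0 hκ v.2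
  rw [coe_neumannOp_apply, anorm_neg, mul_assoc _ κ⁻¹]
  refine (memH_toep hρ hs hu hR).2.trans ?_
  have := mul_nonneg (Cs_nonneg s) (anorm_nonneg (ρ := ρ) (s := s) u)
  gcongr

lemma coe_neumannOp_pow_apply (hρ : 0 ≤ ρ) (hs : 1 / 2 < s) (hu : MemH ρ s u) (hκ : 0 < κ)
    (j : ℕ) (v : sobolev ρ s) :
    ((neumannOp hρ hs hu hκ ^ j) v : ℤ → ℂ) = (-1 : ℂ) ^ j • (fun h => Toep u (R0 κ h))^[j] v := by
  induction j with
  | zero => simp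
  | succ j ih =>
    have hR0 : ∀ (c : ℂ) (x : ℤ → ℂ), R0 κ (c • x) = c • R0 κ x :=
      (freeResolvent κ).map_smul
    rw [pow_succ', Module.End.mul_apply, coe_neumannOp_apply, ih, Function.iterate_succ_apply',
      hR0, Toep_smul, pow_succ, mul_neg_one, neg_smul]

lemma lax_add_mul_eq (f : ℤ → ℂ) (n : ℤ) :
    LaxOp u f n + κ * f n = (2 * n + κ) * f n + Toep u f n := by
  unfold LaxOp
  ring

lemma memHplus_lax (hρ : 0 ≤ ρ) (hs : 1 / 2 < s) (hu : MemH ρ s u) {f : ℤ → ℂ}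
    (hf : MemHplus ρ (s + 1) f) : MemHplus ρ s (fun n => LaxOp u f n + κ * f n) := by
  have hfree : MemH ρ s (fun n => (2 * n + κ) * f n) := by
    refine (memH_and_anorm_le_mul hf.1 (c := 2 + |κ|) (by positivity) fun n => ?_).1
    have hn : ‖2 * (n : ℂ) + κ‖ ≤ (2 + |κ|) * jb n := by
      calc ‖2 * (n : ℂ) + κ‖ ≤ 2 * |(n : ℝ)| + |κ| := by
            refine (norm_add_le _ _).trans_eq ?_
            rw [norm_mul, Complex.norm_real, Complex.norm_intCast, Complex.norm_two,
              Real.norm_eq_abs]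
        _ ≤ (2 + |κ|) * jb n := by nlinarith [abs_le_jb n, one_le_jb n, abs_nonneg κ]
    rw [norm_mul, wt_add_one]
    calc wt ρ s n * (‖2 * (n : ℂ) + κ‖ * ‖f n‖) ≤ wt ρ s n * ((2 + |κ|) * jb n * ‖f n‖) := by
          have := wt_pos ρ s n
          gcongr
      _ = _ := by ring
  have hlax := memH_add_and_anorm_add_le hfree
    (memH_toep hρ hs hu (MemHplus.of_add_one hf).1).1
  have heq : (fun n => LaxOp u f n + κ * f n) = (fun n => (2 * n + κ) * f n) + Toep u f :=
    funext fun n => lax_add_mul_eq f n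
  refine ⟨heq ▸ hlax.1, fun n hn => ?_⟩
  rw [heq, Pi.add_apply, hf.2 n hn, Toep, Cplus_eq_zero _ hn]
  simp

lemma lax_R0_eq_of_sub_apply_eq (hρ : 0 ≤ ρ) (hs : 1 / 2 < s) (hu : MemH ρ s u) (hκ : 0 < κ)
    {w g : sobolev ρ s} (hg : ∀ n ≤ 0, (g : ℤ → ℂ) n = 0)
    (h : w - neumannOp hρ hs hu hκ w = g) (n : ℤ) :
    LaxOp u (R0 κ w) n + κ * R0 κ w n = (g : ℤ → ℂ) n := by
  rw [lax_add_mul_eq]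
  rcases le_or_gt n 0 with hn | hn
  · rw [R0_eq_zero _ hn, hg n hn, Toep, Cplus_eq_zero _ hn]
    simp
  · rw [← h]
    simp only [Submodule.coe_sub, coe_neumannOp_apply, Pi.sub_apply, Pi.neg_apply, sub_neg_eq_add]
    rw [R0, if_pos hn, ← mul_assoc, mul_inv_cancel₀ (two_mul_add_ne_zero hκ.le hn), one_mul]

lemma R0_sub_toep_of_lax_eq (hκ : 0 ≤ κ) {f g : ℤ → ℂ} (hf : ∀ n ≤ 0, f n = 0)
    (h : ∀ n, LaxOp u f n + κ * f n = g n) : R0 κ (g - Toep u f) = f := by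
  convert R0_two_mul_add_mul hκ hf using 2
  funext n
  rw [Pi.sub_apply, ← h, lax_add_mul_eq, add_sub_cancel_right]

lemma anorm_sub_R0_neumann_le (hρ : 0 ≤ ρ) (hs : 1 / 2 < s) (hu : MemH ρ s u)
    (hκu : Cs s * anorm ρ s u < κ) {f g : ℤ → ℂ} (hf : MemHplus ρ s f) (hg : MemH ρ s g)
    (h : ∀ n, LaxOp u f n + κ * f n = g n) (N : ℕ) :
    anorm ρ s (f - R0 κ (∑ j ∈ Finset.range N, (-1 : ℂ) ^ j • (fun h => Toep u (R0 κ h))^[j] g))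
      ≤ (Cs s * anorm ρ s u * κ⁻¹) ^ N * ((κ - Cs s * anorm ρ s u)⁻¹ * anorm ρ s g) := by
  have hCu := mul_nonneg (Cs_nonneg s) (anorm_nonneg (ρ := ρ) (s := s) u)
  have hκ : 0 < κ := hCu.trans_lt hκu
  set r := Cs s * anorm ρ s u * κ⁻¹
  have hr0 : 0 ≤ r := by positivity
  have hr1 : r < 1 := by rwa [mul_inv_lt_iff₀ hκ, one_mul]
  set T := neumannOp hρ hs hu hκ
  have hT := anorm_neumannOp_apply_le hρ hs hu hκ
  let w : sobolev ρ s := ⟨g - Toep u f, (memH_sub_and_anorm_sub_le hg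
    (memH_toep hρ hs hu hf.1).1).1⟩
  have hRw : R0 κ w = f := R0_sub_toep_of_lax_eq hκ.le hf.2 h
  have hw : w - T w = ⟨g, hg⟩ := by
    ext n
    simp [T, w, coe_neumannOp_apply, hRw]
  have hS : (∑ j ∈ Finset.range N, (-1 : ℂ) ^ j • (fun h => Toep u (R0 κ h))^[j] g)
      = ((∑ i ∈ Finset.range N, T ^ i) ⟨g, hg⟩ : ℤ → ℂ) := by
    simp [T, coe_neumannOp_pow_apply]
  have herr : f - R0 κ (∑ j ∈ Finset.range N, (-1 : ℂ) ^ j • (fun h => Toep u (R0 κ h))^[j] g)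
      = R0 κ ((T ^ N) w) := by
    rw [hS, ← hRw, ← sub_geom_sum_apply_of_sub_apply_eq hw N]
    exact ((freeResolvent κ).map_sub _ _).symm
  rw [herr]
  calc anorm ρ s (R0 κ ((T ^ N) w)) ≤ κ⁻¹ * (r ^ N * ((1 - r)⁻¹ * anorm ρ s g)) := by
        refine (memH_R0 hκ ((T ^ N) w).2).2.trans ?_
        gcongr
        exact (anorm_pow_apply_le hr0 hT N w).trans
          (by gcongr; exact anorm_le_of_sub_apply_eq hr1 hT hw)
    _ = _ := by
        rw [show κ - Cs s * anorm ρ s u = κ * (1 - r) by simp only [r]; field_simp, mul_inv]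
        ring

lemma anorm_le_of_lax_eq (hρ : 0 ≤ ρ) (hs : 1 / 2 < s) (hu : MemH ρ s u)
    (hκu : Cs s * anorm ρ s u < κ) {f g : ℤ → ℂ} (hf : MemHplus ρ s f) (hg : MemH ρ s g)
    (h : ∀ n, LaxOp u f n + κ * f n = g n) :
    anorm ρ s f ≤ (κ - Cs s * anorm ρ s u)⁻¹ * anorm ρ s g := by
  simpa [show R0 κ 0 = 0 from (freeResolvent κ).map_zero] using
    anorm_sub_R0_neumann_le hρ hs hu hκu hf hg h 0

end Lax

section LaxEquiv

variable {ρ s κ : ℝ} {u : ℤ → ℂ}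

def laxShift (hρ : 0 ≤ ρ) (hs : 1 / 2 < s) (hu : MemH ρ s u) (κ : ℝ) :
    hardySobolev ρ (s + 1) →ₗ[ℂ] hardySobolev ρ s where
  toFun f := ⟨fun n => LaxOp u f n + κ * (f : ℤ → ℂ) n, memHplus_lax hρ hs hu f.2⟩
  map_add' f g := by
    ext n
    simp only [LaxOp, Submodule.coe_add, Pi.add_apply,
      Toep_add hρ hs hu (MemHplus.of_add_one f.2).1 (MemHplus.of_add_one g.2).1]
    ring
  map_smul' c f := by
    ext n
    simp only [LaxOp, Submodule.coe_smul, Pi.smul_apply, smul_eq_mul, Toep_smul, RingHom.id_apply]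
    ring

lemma laxShift_bijective (hρ : 0 ≤ ρ) (hs : 1 / 2 < s) (hu : MemH ρ s u)
    (hκu : Cs s * anorm ρ s u < κ) : Function.Bijective (laxShift hρ hs hu κ) := by
  have hCu := mul_nonneg (Cs_nonneg s) (anorm_nonneg (ρ := ρ) (s := s) u)
  have hκ : 0 < κ := hCu.trans_lt hκu
  refine ⟨(injective_iff_map_eq_zero _).2 fun f hf => ?_, fun g => ?_⟩
  · have hfs := MemHplus.of_add_one f.2
    have hf0 := anorm_le_of_lax_eq hρ hs hu hκu hfs (sobolev ρ s).zero_mem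
      fun n => congrFun (congrArg Subtype.val hf) n
    rw [show anorm ρ s 0 = 0 by simp [anorm], mul_zero] at hf0
    exact Subtype.ext (eq_zero_of_anorm_eq_zero hfs.1 (le_antisymm hf0 (anorm_nonneg _)))
  · obtain ⟨w, hw⟩ := exists_sub_apply_eq (T := neumannOp hρ hs hu hκ) (by positivity)
      (by rwa [mul_inv_lt_iff₀ hκ, one_mul]) (anorm_neumannOp_apply_le hρ hs hu hκ) ⟨g, g.2.1⟩
    exact ⟨⟨R0 κ w, memHplus_R0_add_one hκ.le w.2⟩, Subtype.ext (funext fun n =>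
      lax_R0_eq_of_sub_apply_eq hρ hs hu hκ g.2.2 hw n)⟩

lemma exists_linearMap_lax_inverse (hρ : 0 ≤ ρ) (hs : 1 / 2 < s) (hu : MemH ρ s u)
    (hκu : Cs s * anorm ρ s u < κ) :
    ∃ R : (ℤ → ℂ) →ₗ[ℂ] (ℤ → ℂ),
      (∀ g, MemHplus ρ s g →
        MemHplus ρ (s + 1) (R g) ∧ ∀ n, LaxOp u (R g) n + κ * R g n = g n) ∧
      ∀ f, MemHplus ρ (s + 1) f → R (fun n => LaxOp u f n + κ * f n) = f := by
  let e := LinearEquiv.ofBijective _ (laxShift_bijective hρ hs hu hκu)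
  obtain ⟨W, hW⟩ := Submodule.exists_isCompl (hardySobolev ρ s)
  let R := (hardySobolev ρ (s + 1)).subtype ∘ₗ e.symm.toLinearMap ∘ₗ
    Submodule.projectionOnto _ _ hW
  have hR : ∀ g (hg : MemHplus ρ s g), R g = e.symm ⟨g, hg⟩ := fun g hg => by
    simp [R, Submodule.projectionOnto_apply_left hW ⟨g, hg⟩]
  refine ⟨R, fun g hg => ⟨hR g hg ▸ (e.symm _).2, ?_⟩, fun f hf => ?_⟩
  · exact hR g hg ▸ congrFun (congrArg Subtype.val (e.apply_symm_apply ⟨g, hg⟩))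
  · exact (hR _ (memHplus_lax hρ hs hu hf)).trans
      (congrArg Subtype.val (e.symm_apply_apply ⟨f, hf⟩))

end LaxEquiv

theorem lax_resolvent_general (ρ s κ : ℝ) (hρ : 0 < ρ) (hs : 1 ≤ s) (u : ℤ → ℂ)
    (hu : MemH ρ s u)
    (hκ : 100 * Cs s * anorm ρ s u < κ) :
    ∃ R : (ℤ → ℂ) →ₗ[ℂ] (ℤ → ℂ),
      (∀ g : ℤ → ℂ, MemHplus ρ s g →
        MemHplus ρ (s + 1) (R g) ∧
        (∀ n : ℤ, LaxOp u (R g) n + (κ : ℂ) * R g n = g n) ∧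
        anorm ρ s (R g) ≤ (κ - Cs s * anorm ρ s u)⁻¹ * anorm ρ s g) ∧
      (∀ f : ℤ → ℂ, MemHplus ρ (s + 1) f →
        MemHplus ρ s (fun n => LaxOp u f n + (κ : ℂ) * f n) ∧
        R (fun n => LaxOp u f n + (κ : ℂ) * f n) = f) ∧
      (∀ ε > (0 : ℝ), ∃ N₀ : ℕ, ∀ N ≥ N₀, ∀ g : ℤ → ℂ, MemHplus ρ s g →
        anorm ρ s (fun n => R g n -
          R0 κ (∑ j ∈ Finset.range N,
            ((-1 : ℂ) ^ j) • ((fun h => Toep u (R0 κ h))^[j] g)) n)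
          ≤ ε * anorm ρ s g) := by
  have hs' : 1 / 2 < s := by linarith
  have hCu := mul_nonneg (Cs_nonneg s) (anorm_nonneg (ρ := ρ) (s := s) u)
  have hκu : Cs s * anorm ρ s u < κ := by linarith
  have hκ0 : 0 < κ := hCu.trans_lt hκu
  obtain ⟨R, hRsol, hRinv⟩ := exists_linearMap_lax_inverse hρ.le hs' hu hκu
  refine ⟨R, fun g hg => ⟨(hRsol g hg).1, (hRsol g hg).2, ?_⟩,
    fun f hf => ⟨memHplus_lax hρ.le hs' hu hf, hRinv f hf⟩, fun ε hε => ?_⟩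
  · exact anorm_le_of_lax_eq hρ.le hs' hu hκu (hRsol g hg).1.of_add_one hg.1 (hRsol g hg).2
  · have hr1 : Cs s * anorm ρ s u * κ⁻¹ < 1 := by rwa [mul_inv_lt_iff₀ hκ0, one_mul]
    have hlim := (tendsto_pow_atTop_nhds_zero_of_lt_one (by positivity) hr1).mul_const
      (κ - Cs s * anorm ρ s u)⁻¹
    rw [zero_mul] at hlim
    obtain ⟨N₀, hN₀⟩ := eventually_atTop.1 (hlim.eventually (ge_mem_nhds hε))
    refine ⟨N₀, fun N hN g hg => ?_⟩
    refine (anorm_sub_R0_neumann_le hρ.le hs' hu hκu (hRsol g hg).1.of_add_one hg.1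
      (hRsol g hg).2 N).trans ?_
    rw [← mul_assoc]
    exact mul_le_mul_of_nonneg_right (hN₀ N hN) (anorm_nonneg _)

/-- For `s ≥ 1`, `ρ > 0`, real zero-mean `u ∈ H₀^{ρ,s}` and
`κ > 100 C_s ‖u‖_{ρ,s}`, the point `-κ` is in the resolvent set of `L_u` on
`H₊^{ρ,s}`: there is a linear operator `R = (L_u+κ)⁻¹` mapping `H₊^{ρ,s}`
bijectively onto `H₊^{ρ,s+1}`, given by the Neumann series
`R = R₀(κ) Σ_j (-1)^j [T_u R₀(κ)]^j` (convergent in operator norm), with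
`‖R‖ ≤ (κ - C_s‖u‖_{ρ,s})⁻¹`. -/
theorem lax_resolvent (ρ s κ : ℝ) (hρ : 0 < ρ) (hs : 1 ≤ s) (u : ℤ → ℂ)
    (hu : MemH ρ s u) (hu0 : u 0 = 0) (hur : IsReal u)
    (hκ : 100 * Cs s * anorm ρ s u < κ) :
    ∃ R : (ℤ → ℂ) →ₗ[ℂ] (ℤ → ℂ),
      (∀ g : ℤ → ℂ, MemHplus ρ s g →
        MemHplus ρ (s + 1) (R g) ∧
        (∀ n : ℤ, LaxOp u (R g) n + (κ : ℂ) * R g n = g n) ∧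
        anorm ρ s (R g) ≤ (κ - Cs s * anorm ρ s u)⁻¹ * anorm ρ s g) ∧
      (∀ f : ℤ → ℂ, MemHplus ρ (s + 1) f →
        MemHplus ρ s (fun n => LaxOp u f n + (κ : ℂ) * f n) ∧
        R (fun n => LaxOp u f n + (κ : ℂ) * f n) = f) ∧
      (∀ ε > (0 : ℝ), ∃ N₀ : ℕ, ∀ N ≥ N₀, ∀ g : ℤ → ℂ, MemHplus ρ s g →
        anorm ρ s (fun n => R g n -
          R0 κ (∑ j ∈ Finset.range N,
            ((-1 : ℂ) ^ j) • ((fun h => Toep u (R0 κ h))^[j] g)) n)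
          ≤ ε * anorm ρ s g) :=
  lax_resolvent_general ρ s κ hρ hs u hu hκ

end BO
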